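/- Let R > 0, let A be a nonzero purely imaginary quaternion, and let B ∈ ℍ with ‖B‖ = 1. Then the Korányi gauge of the point P = (−A⁻¹(1 − exp(RA))B, −(2/‖A‖³)(‖A‖R − sin(‖A‖R))A) equals ‖P‖_K = (4(1 − cos(‖A‖R))² + 4(‖A‖R − sin(‖A‖R))²)^{1/4} / ‖A‖. -/

import Mathlib

/-! For imaginary `q`, `exp q` is a unit quaternion with real part `cos ‖q‖`, so
`‖1 - exp q‖² = 2 (1 - cos ‖q‖)`. The two components of the point have norms of the form
`x / ‖A‖` and `y / ‖A‖²`, and the gauge is homogeneous of degree one for this scaling, which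
produces the factor `1 / ‖A‖`. -/

open Quaternion

noncomputable def kGauge (P : ℍ[ℝ] × ℍ[ℝ]) : ℝ :=
  (‖P.1‖ ^ 4 + ‖P.2‖ ^ 2) ^ ((1 : ℝ) / 4)

namespace Quaternion

theorem norm_one_sub_exp_sq_of_re_eq_zero {q : ℍ[ℝ]} (hq : q.re = 0) :
    ‖1 - NormedSpace.exp q‖ ^ 2 = 2 * (1 - Real.cos ‖q‖) := by
  rw [norm_sub_sq_real, inner_def, norm_exp, one_mul, re_star, re_exp, hq]
  simp only [coe_zero, sub_zero, NormedSpace.exp_zero, norm_one]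
  ring

end Quaternion

theorem norm_smul_div_pow_three_sq {E : Type*} [NormedAddCommGroup E] [NormedSpace ℝ E]
    (c : ℝ) (v : E) : ‖(c / ‖v‖ ^ 3) • v‖ ^ 2 = c ^ 2 / ‖v‖ ^ 4 := by
  rcases eq_or_ne ‖v‖ 0 with hv | hv
  · simp [hv]
  · rw [norm_smul, mul_pow, Real.norm_eq_abs, sq_abs]
    field_simp

theorem kGauge_eq_of_norm_sq {P : ℍ[ℝ] × ℍ[ℝ]} {a x y : ℝ} (ha : 0 ≤ a) (hy : 0 ≤ y)
    (h₁ : ‖P.1‖ ^ 2 = x / a ^ 2) (h₂ : ‖P.2‖ ^ 2 = y / a ^ 4) :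
    kGauge P = (x ^ 2 + y) ^ ((1 : ℝ) / 4) / a := by
  have hsum : ‖P.1‖ ^ 4 + ‖P.2‖ ^ 2 = (x ^ 2 + y) / a ^ 4 := by
    rw [show ‖P.1‖ ^ 4 = (‖P.1‖ ^ 2) ^ 2 by ring, h₁, h₂, div_pow, ← pow_mul, add_div]
  rw [kGauge, hsum, Real.div_rpow (by positivity) (by positivity), one_div]
  congr 1
  exact_mod_cast Real.pow_rpow_inv_natCast ha four_ne_zero

theorem koranyi_gauge_of_cc_sphere_point
    (R : ℝ) (A B : ℍ[ℝ]) (him : A.re = 0)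
    (hB : ‖B‖ = 1) :
    kGauge
      (-(A⁻¹ * ((1 - NormedSpace.exp (R • A)) * B)),
        -(2 / ‖A‖ ^ 3 * (‖A‖ * R - Real.sin (‖A‖ * R))) • A) =
    (4 * (1 - Real.cos (‖A‖ * R)) ^ 2 +
      4 * (‖A‖ * R - Real.sin (‖A‖ * R)) ^ 2) ^ ((1 : ℝ) / 4) / ‖A‖ := by
  have hexp : ‖1 - NormedSpace.exp (R • A)‖ ^ 2 = 2 * (1 - Real.cos (‖A‖ * R)) := by
    rw [norm_one_sub_exp_sq_of_re_eq_zero (by simp [him]), norm_smul, Real.norm_eq_abs,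
      ← Real.cos_abs (‖A‖ * R), abs_mul, abs_norm, mul_comm ‖A‖]
  rw [kGauge_eq_of_norm_sq (x := 2 * (1 - Real.cos (‖A‖ * R))) (norm_nonneg A)
    (by positivity : 0 ≤ 4 * (‖A‖ * R - Real.sin (‖A‖ * R)) ^ 2)]
  · congr 3
    ring
  · rw [norm_neg, norm_mul, norm_mul, hB, mul_one, norm_inv, mul_pow, inv_pow, hexp,
      inv_mul_eq_div]
  · rw [neg_smul, norm_neg, div_mul_eq_mul_div, norm_smul_div_pow_three_sq]
    ring
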